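/- arXiv:1302.4242 — 2 statements merged into one kernel-verified Lean document; each statement's English description precedes it below -/
import Mathlib

section
/- For unit vectors u_1,...,u_M in R^N with M > N, the coherence μ = max_{i≠j} |⟨u_i, u_j⟩| satisfies the Welch bound μ ≥ sqrt((M - N)/(N(M - 1))). -/
/-!
Write the `u i` in an orthonormal basis as the rows of an `M × N` matrix `A`. The Gram matrix
`A Aᵀ` and the frame operator `Aᵀ A` have the same Frobenius norm, and Cauchy–Schwarz on the
diagonal of the `N × N` matrix `Aᵀ A`, whose trace is `∑ ‖u i‖² = M`, gives
`M² ≤ N ∑ᵢⱼ ⟨u i, u j⟩²`. Bounding the `M² - M` off-diagonal terms by `μ²` yields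
`M - N ≤ N (M - 1) μ²`.
-/

open scoped RealInnerProductSpace Matrix
open Finset Module

namespace Matrix

variable {m n : Type*} [Fintype m] [Fintype n]

theorem sum_sq_eq_trace_transpose_mul (B : Matrix m n ℝ) :
    ∑ i, ∑ j, B i j ^ 2 = (Bᵀ * B).trace := by
  simp only [trace, diag_apply, mul_apply, transpose_apply, sq]
  exact sum_comm

theorem sum_sq_mul_transpose_eq (A : Matrix m n ℝ) :
    ∑ i, ∑ j, (A * Aᵀ) i j ^ 2 = ∑ a, ∑ c, (Aᵀ * A) a c ^ 2 := by
  rw [sum_sq_eq_trace_transpose_mul, sum_sq_eq_trace_transpose_mul, transpose_mul,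
    transpose_mul, transpose_transpose, Matrix.mul_assoc, trace_mul_comm, Matrix.mul_assoc,
    Matrix.mul_assoc, Matrix.mul_assoc]

theorem sq_trace_le_card_mul_sum_sq (A : Matrix n n ℝ) :
    A.trace ^ 2 ≤ Fintype.card n * ∑ i, ∑ j, A i j ^ 2 :=
  calc A.trace ^ 2 ≤ Fintype.card n * ∑ i, A i i ^ 2 := sq_sum_le_card_mul_sum_sq
    _ ≤ Fintype.card n * ∑ i, ∑ j, A i j ^ 2 := by
      gcongr with i
      exact single_le_sum (f := fun j => A i j ^ 2) (fun j _ => sq_nonneg _) (mem_univ i)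

end Matrix

section

variable {ι E : Type*} [Fintype ι] [NormedAddCommGroup E] [InnerProductSpace ℝ E]

theorem sq_sum_norm_sq_le_finrank_mul_sum_sq_inner [FiniteDimensional ℝ E] (v : ι → E) :
    (∑ i, ‖v i‖ ^ 2) ^ 2 ≤ finrank ℝ E * ∑ i, ∑ j, ⟪v i, v j⟫ ^ 2 := by
  let b := stdOrthonormalBasis ℝ E
  let A : Matrix ι (Fin (finrank ℝ E)) ℝ := Matrix.of fun i a => ⟪v i, b a⟫
  have gram : ∀ i j, ⟪v i, v j⟫ = (A * Aᵀ) i j := fun i j => by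
    simp only [A, Matrix.mul_apply, Matrix.transpose_apply, Matrix.of_apply]
    rw [← b.sum_inner_mul_inner]
    simp only [real_inner_comm (b _) (v j)]
  have trace_eq : ∑ i, ‖v i‖ ^ 2 = (Aᵀ * A).trace := by
    rw [Matrix.trace_mul_comm]
    simp only [← real_inner_self_eq_norm_sq, gram, Matrix.trace, Matrix.diag_apply]
  simpa only [trace_eq, gram, Matrix.sum_sq_mul_transpose_eq, Fintype.card_fin] using
    (Aᵀ * A).sq_trace_le_card_mul_sum_sq

theorem sum_sq_inner_le_of_abs_inner_le {v : ι → E} (hv : ∀ i, ‖v i‖ = 1) {μ : ℝ}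
    (hμ : ∀ i j, i ≠ j → |⟪v i, v j⟫| ≤ μ) :
    ∑ i, ∑ j, ⟪v i, v j⟫ ^ 2 ≤ Fintype.card ι * (1 + (Fintype.card ι - 1) * μ ^ 2) := by
  classical
  have row : ∀ i, ∑ j, ⟪v i, v j⟫ ^ 2 ≤ 1 + (Fintype.card ι - 1) * μ ^ 2 := fun i => by
    have off : ∑ j ∈ univ.erase i, ⟪v i, v j⟫ ^ 2 ≤ (Fintype.card ι - 1) * μ ^ 2 := by
      have := sum_le_card_nsmul (univ.erase i) (fun j => ⟪v i, v j⟫ ^ 2) (μ ^ 2) fun j hj =>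
        sq_le_sq.mpr ((hμ i j (ne_of_mem_erase hj).symm).trans (le_abs_self μ))
      rwa [nsmul_eq_mul, card_erase_of_mem (mem_univ i), card_univ,
        Nat.cast_pred (Fintype.card_pos_iff.mpr ⟨i⟩)] at this
    rw [← add_sum_erase _ _ (mem_univ i), real_inner_self_eq_norm_sq, hv i]
    linarith
  calc ∑ i, ∑ j, ⟪v i, v j⟫ ^ 2 ≤ ∑ _i : ι, (1 + (Fintype.card ι - 1) * μ ^ 2) :=
        sum_le_sum fun i _ => row i
    _ = _ := by rw [sum_const, card_univ, nsmul_eq_mul]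

theorem card_sub_finrank_le_of_abs_inner_le [FiniteDimensional ℝ E] [Nonempty ι] {v : ι → E}
    (hv : ∀ i, ‖v i‖ = 1) {μ : ℝ} (hμ : ∀ i j, i ≠ j → |⟪v i, v j⟫| ≤ μ) :
    (Fintype.card ι : ℝ) - finrank ℝ E ≤ finrank ℝ E * (Fintype.card ι - 1) * μ ^ 2 := by
  have frame := sq_sum_norm_sq_le_finrank_mul_sum_sq_inner v
  simp only [hv, one_pow, sum_const, card_univ, nsmul_eq_mul, mul_one] at frame
  have := frame.trans (mul_le_mul_of_nonneg_left (sum_sq_inner_le_of_abs_inner_le hv hμ)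
    (Nat.cast_nonneg _))
  have hcard : (0 : ℝ) < Fintype.card ι := by exact_mod_cast Fintype.card_pos
  nlinarith

end

theorem welch_bound_general (N M : ℕ)
    (u : Fin M → EuclideanSpace ℝ (Fin N)) (hu : ∀ i, ‖u i‖ = 1)
    (μ : ℝ)
    (hμ : IsGreatest {x : ℝ | ∃ i j : Fin M, i ≠ j ∧ x = |⟪u i, u j⟫|} μ) :
    Real.sqrt (((M : ℝ) - N) / (N * ((M : ℝ) - 1))) ≤ μ := by
  obtain ⟨i, _, -, hμij⟩ := hμ.1
  have : Nonempty (Fin M) := ⟨i⟩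
  have key := card_sub_finrank_le_of_abs_inner_le hu fun i j hij => hμ.2 ⟨i, j, hij, rfl⟩
  rw [Fintype.card_fin, finrank_euclideanSpace_fin] at key
  have hM : (1 : ℝ) ≤ M := by exact_mod_cast i.pos
  -- `div_le_of_le_mul₀` also covers `N (M - 1) = 0`, where the quotient is the junk value `0`.
  refine Real.sqrt_le_iff.mpr ⟨hμij ▸ abs_nonneg _, div_le_of_le_mul₀ ?_ (sq_nonneg μ) ?_⟩
  · have := sub_nonneg.mpr hM
    positivity
  · linarith

/-- Welch bound: for `M` unit vectors in `ℝ^N` with `N < M`, the coherence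
`μ = max_{i ≠ j} |⟨u i, u j⟩|` satisfies `μ ≥ sqrt((M - N)/(N(M-1)))`. -/
theorem welch_bound (N M : ℕ) (hN : 0 < N) (hNM : N < M)
    (u : Fin M → EuclideanSpace ℝ (Fin N)) (hu : ∀ i, ‖u i‖ = 1)
    (μ : ℝ)
    (hμ : IsGreatest {x : ℝ | ∃ i j : Fin M, i ≠ j ∧ x = |⟪u i, u j⟫|} μ) :
    Real.sqrt (((M : ℝ) - N) / (N * ((M : ℝ) - 1))) ≤ μ :=
  welch_bound_general N M u hu μ hμ
end

section
/- Let U be an N×M matrix with unit-norm columns and coherence μ = max_{i≠j}|⟨u_i,u_j⟩|. Then for every K-sparse vector y ∈ R^M, (1 - (K-1)μ)‖y‖² ≤ ‖Uy‖² ≤ (1 + (K-1)μ)‖y‖². In particular, the K-restricted isometry constant δ of U satisfies δ ≤ (K-1)μ. -/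
open Matrix

/-- For an `N × M` matrix with unit-norm columns and coherence `μ`, every
`K`-sparse vector `y` satisfies
`(1-(K-1)μ)‖y‖² ≤ ‖Uy‖² ≤ (1+(K-1)μ)‖y‖²`; in particular the `K`-restricted
isometry constant of `U` is at most `(K-1)μ`. -/
theorem rip_from_coherence (N M K : ℕ) (U : Matrix (Fin N) (Fin M) ℝ)
    (hcol : ∀ j, ∑ i, (U i j) ^ 2 = 1) (μ : ℝ)
    (hμ : IsGreatest {x : ℝ | ∃ i j : Fin M, i ≠ j ∧ x = |∑ k, U k i * U k j|} μ)
    (y : Fin M → ℝ)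
    (hy : (Finset.univ.filter (fun i => y i ≠ 0)).card ≤ K) :
    (1 - ((K : ℝ) - 1) * μ) * ∑ i, (y i) ^ 2 ≤ ∑ i, (U.mulVec y i) ^ 2 ∧
      ∑ i, (U.mulVec y i) ^ 2 ≤ (1 + ((K : ℝ) - 1) * μ) * ∑ i, (y i) ^ 2 := by
  obtain ⟨⟨i0, j0, hij0, hμval⟩, hub⟩ := hμ
  have hμ0 : 0 ≤ μ := hμval ▸ abs_nonneg _
  have hg : ∀ i j : Fin M, i ≠ j → |∑ k, U k i * U k j| ≤ μ :=
    fun i j h => hub ⟨i, j, h, rfl⟩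
  set S := Finset.univ.filter (fun i => y i ≠ 0) with hS
  set s := ∑ i, (y i) ^ 2 with hs
  have hs0 : 0 ≤ s := Finset.sum_nonneg fun i _ => sq_nonneg _
  have hySc : ∀ j : Fin M, j ∉ S → y j = 0 := by
    intro j hj
    by_contra h
    exact hj (Finset.mem_filter.mpr ⟨Finset.mem_univ _, h⟩)
  -- expand the quadratic form
  have key : ∑ i, (U.mulVec y i) ^ 2
      = ∑ j, ∑ j', (y j * y j') * ∑ i, U i j * U i j' := by
    calc ∑ i, (U.mulVec y i) ^ 2
        = ∑ i, ∑ j, ∑ j', (U i j * y j) * (U i j' * y j') := by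
          simp [Matrix.mulVec, dotProduct, sq, Finset.sum_mul_sum]
      _ = ∑ j, ∑ j', (y j * y j') * ∑ i, U i j * U i j' := by
          rw [Finset.sum_comm]
          refine Finset.sum_congr rfl fun j _ => ?_
          rw [Finset.sum_comm]
          refine Finset.sum_congr rfl fun j' _ => ?_
          rw [Finset.mul_sum]
          exact Finset.sum_congr rfl fun i _ => by ring
  -- restrict to the support
  have key2 : ∑ i, (U.mulVec y i) ^ 2
      = ∑ j ∈ S, ∑ j' ∈ S, (y j * y j') * ∑ i, U i j * U i j' := by
    rw [key]
    rw [← Finset.sum_subset (Finset.subset_univ S)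
      (fun j _ hj => by simp [hySc j hj])]
    refine Finset.sum_congr rfl fun j _ => ?_
    rw [← Finset.sum_subset (Finset.subset_univ S)
      (fun j' _ hj' => by simp [hySc j' hj'])]
  -- split diagonal and off-diagonal
  have hsS : ∑ j ∈ S, (y j) ^ 2 = s := by
    rw [hs]
    exact Finset.sum_subset (Finset.subset_univ S)
      (fun j _ hj => by simp [hySc j hj])
  set E := ∑ j ∈ S, ∑ j' ∈ S.erase j, (y j * y j') * ∑ i, U i j * U i j'
    with hE
  have key3 : ∑ i, (U.mulVec y i) ^ 2 = s + E := by
    rw [key2, ← hsS, hE, ← Finset.sum_add_distrib]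
    refine Finset.sum_congr rfl fun j hj => ?_
    rw [← Finset.add_sum_erase _ _ hj]
    have hdiag : ∑ i, U i j * U i j = 1 := by
      rw [← hcol j]; exact Finset.sum_congr rfl fun _ _ => (sq (U _ j)).symm
    rw [hdiag]; ring
  -- bound |E|
  have hEbound : |E| ≤ ((K : ℝ) - 1) * μ * s := by
    have h1 : |E| ≤ ∑ j ∈ S, ∑ j' ∈ S.erase j, |y j| * |y j'| * μ := by
      refine (Finset.abs_sum_le_sum_abs _ _).trans ?_
      refine Finset.sum_le_sum fun j _ => ?_
      refine (Finset.abs_sum_le_sum_abs _ _).trans ?_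
      refine Finset.sum_le_sum fun j' hj' => ?_
      rw [abs_mul, abs_mul]
      exact mul_le_mul_of_nonneg_left
        (hg j j' (Ne.symm (Finset.ne_of_mem_erase hj')))
        (mul_nonneg (abs_nonneg _) (abs_nonneg _))
    set A := ∑ j ∈ S, |y j| with hA
    have h2 : ∑ j ∈ S, ∑ j' ∈ S.erase j, |y j| * |y j'| * μ
        = μ * (A * A - s) := by
      have : ∀ j ∈ S, ∑ j' ∈ S.erase j, |y j| * |y j'| * μ
          = μ * (|y j| * A - (y j)^2) := by
        intro j hj
        have : ∑ j' ∈ S.erase j, |y j'| = A - |y j| := by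
          rw [hA, ← Finset.add_sum_erase _ _ hj]; ring
        calc ∑ j' ∈ S.erase j, |y j| * |y j'| * μ
            = μ * |y j| * ∑ j' ∈ S.erase j, |y j'| := by
              rw [Finset.mul_sum]
              exact Finset.sum_congr rfl fun _ _ => by ring
          _ = μ * (|y j| * A - (y j)^2) := by
              rw [this, ← sq_abs (y j)]; ring
      rw [Finset.sum_congr rfl this, ← Finset.mul_sum, Finset.sum_sub_distrib,
        ← Finset.sum_mul, hsS]
    have h3 : A * A ≤ (S.card : ℝ) * s := by
      have h := sq_sum_le_card_mul_sum_sq (s := S) (f := fun j => |y j|)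
      rw [← hsS]
      calc A * A = (∑ j ∈ S, |y j|) ^ 2 := by rw [hA]; ring
        _ ≤ (S.card : ℝ) * ∑ j ∈ S, |y j| ^ 2 := h
        _ = (S.card : ℝ) * ∑ j ∈ S, (y j) ^ 2 := by
            congr 1; exact Finset.sum_congr rfl fun j _ => sq_abs _
    have hcard : (S.card : ℝ) ≤ K := by exact_mod_cast hy
    calc |E| ≤ μ * (A * A - s) := h1.trans (le_of_eq h2)
      _ ≤ μ * ((K : ℝ) * s - s) := by
          refine mul_le_mul_of_nonneg_left ?_ hμ0
          have : (S.card : ℝ) * s ≤ (K : ℝ) * s :=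
            mul_le_mul_of_nonneg_right hcard hs0
          linarith
      _ = ((K : ℝ) - 1) * μ * s := by ring
  rw [key3]
  rw [abs_le] at hEbound
  constructor <;> nlinarith [hEbound.1, hEbound.2]
end
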